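/- arXiv:2009.07821 — 10 statements merged into one kernel-verified Lean document; each statement's English description precedes it below -/
import Mathlib

section
/- Let (A, μ, α, β) be a regular BiHom-algebra. Then A is BiHom-alternative (both left and right BiHom-alternative) if and only if the trilinear map (x,y,z) ↦ as_{α,β}(β²(x), αβ(y), α²(z)) is alternating. -/
variable {K A : Type*} [Field K] [CharZero K] [AddCommGroup A] [Module K A]

/-- BiHom-associator. -/
def biAssoc (μ : A →ₗ[K] A →ₗ[K] A) (α β : A → A) (x y z : A) : A :=
  μ (μ x y) (β z) - μ (α x) (μ y z)

private lemma alt_aux {R B : Type*} [Field R] [CharZero R] [AddCommGroup B] [Module R B]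
    (f : B → B → B → B)
    (add1 : ∀ x x' y z, f (x + x') y z = f x y z + f x' y z)
    (add2 : ∀ x y y' z, f x (y + y') z = f x y z + f x y' z)
    (add3 : ∀ x y z z', f x y (z + z') = f x y z + f x y z') :
    ((∀ x y z, f x y z + f y x z = 0) ∧ (∀ x y z, f x y z + f x z y = 0)) ↔
    (∀ x y z, x = y ∨ y = z ∨ x = z → f x y z = 0) := by
  have half : ∀ a : B, a + a = 0 → a = 0 := by
    intro a h
    have h2 : (2 : R) • a = 0 := by rw [two_smul]; exact h
    rcases smul_eq_zero.mp h2 with h | h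
    · exact absurd h two_ne_zero
    · exact h
  constructor
  · rintro ⟨h12, h23⟩ x y z hxyz
    have e12 : ∀ x z, f x x z = 0 := fun x z => half _ (h12 x x z)
    have e23 : ∀ x y, f x y y = 0 := fun x y => half _ (h23 x y y)
    rcases hxyz with rfl | rfl | rfl
    · exact e12 _ _
    · exact e23 _ _
    · have h := h23 x x y
      rw [e12 x y] at h
      simpa using h
  · intro h
    have e12 : ∀ x z, f x x z = 0 := fun x z => h x x z (Or.inl rfl)
    have e23 : ∀ x y, f x y y = 0 := fun x y => h x y y (Or.inr (Or.inl rfl))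
    constructor
    · intro x y z
      have h0 := h (x + y) (x + y) z (Or.inl rfl)
      rw [add1, add2, add2, e12, e12] at h0
      simpa using h0
    · intro x y z
      have h0 := h x (y + z) (y + z) (Or.inr (Or.inl rfl))
      rw [add2, add3, add3, e23, e23] at h0
      simpa using h0

/-- A regular BiHom-algebra is BiHom-alternative iff
(x,y,z) ↦ as(β²x, αβy, α²z) is alternating. -/
theorem stmt0 (μ : A →ₗ[K] A →ₗ[K] A) (α β : A ≃ₗ[K] A)
    (hcomm : ∀ x, α (β x) = β (α x)) :
    ((∀ x y z, biAssoc μ (⇑α) (⇑β) (β x) (α y) z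
        + biAssoc μ (⇑α) (⇑β) (β y) (α x) z = 0) ∧
     (∀ x y z, biAssoc μ (⇑α) (⇑β) x (β y) (α z)
        + biAssoc μ (⇑α) (⇑β) x (β z) (α y) = 0)) ↔
    (∀ x y z : A, x = y ∨ y = z ∨ x = z →
      biAssoc μ (⇑α) (⇑β) (β (β x)) (α (β y)) (α (α z)) = 0) := by
  let F : A → A → A → A := fun x y z =>
    biAssoc μ (⇑α) (⇑β) (β (β x)) (α (β y)) (α (α z))
  have add1 : ∀ x x' y z, F (x + x') y z = F x y z + F x' y z := by
    intro x x' y z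
    simp only [F, biAssoc, map_add, LinearMap.add_apply]
    abel
  have add2 : ∀ x y y' z, F x (y + y') z = F x y z + F x y' z := by
    intro x y y' z
    simp only [F, biAssoc, map_add, LinearMap.add_apply]
    abel
  have add3 : ∀ x y z z', F x y (z + z') = F x y z + F x y z' := by
    intro x y z z'
    simp only [F, biAssoc, map_add, LinearMap.add_apply]
    abel
  have hcomm' : ∀ x, β (α.symm x) = α.symm (β x) := by
    intro x
    apply α.injective
    rw [hcomm, α.apply_symm_apply, α.apply_symm_apply]
  have hLiff : (∀ x y z, biAssoc μ (⇑α) (⇑β) (β x) (α y) z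
        + biAssoc μ (⇑α) (⇑β) (β y) (α x) z = 0) ↔
      (∀ x y z, F x y z + F y x z = 0) := by
    constructor
    · intro h x y z
      exact h (β x) (β y) (α (α z))
    · intro h x y z
      have h0 := h (β.symm x) (β.symm y) (α.symm (α.symm z))
      simpa [F, β.apply_symm_apply, α.apply_symm_apply] using h0
  have hRiff : (∀ x y z, biAssoc μ (⇑α) (⇑β) x (β y) (α z)
        + biAssoc μ (⇑α) (⇑β) x (β z) (α y) = 0) ↔
      (∀ x y z, F x y z + F x z y = 0) := by
    constructor
    · intro h x y z
      have h0 := h (β (β x)) (α y) (α z)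
      simpa [F, hcomm] using h0
    · intro h x y z
      have h0 := h (β.symm (β.symm x)) (α.symm y) (α.symm z)
      simpa [F, hcomm', β.apply_symm_apply, α.apply_symm_apply] using h0
  rw [hLiff, hRiff]
  exact alt_aux (R := K) F add1 add2 add3
end

section
/- Every regular BiHom-alternative algebra is BiHom-flexible, i.e., as_{α,β}(β²(x), αβ(y), α²(z)) + as_{α,β}(β²(z), αβ(y), α²(x)) = 0 for all x, y, z. -/
variable {K A : Type*} [Field K] [CharZero K] [AddCommGroup A] [Module K A]

/-- every regular BiHom-alternative algebra is BiHom-flexible. -/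
theorem stmt1 (μ : A →ₗ[K] A →ₗ[K] A) (α β : A ≃ₗ[K] A)
    (hcomm : ∀ x, α (β x) = β (α x))
    (hlalt : ∀ x y z, biAssoc μ (⇑α) (⇑β) (β x) (α y) z
        + biAssoc μ (⇑α) (⇑β) (β y) (α x) z = 0)
    (hralt : ∀ x y z, biAssoc μ (⇑α) (⇑β) x (β y) (α z)
        + biAssoc μ (⇑α) (⇑β) x (β z) (α y) = 0) :
    ∀ x y z, biAssoc μ (⇑α) (⇑β) (β (β x)) (α (β y)) (α (α z))
      + biAssoc μ (⇑α) (⇑β) (β (β z)) (α (β y)) (α (α x)) = 0 := by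
  intro x y z
  have h1 := hlalt (β x) (β y) (α (α z))
  have h2 := hralt (β (β y)) (α x) (α z)
  rw [← hcomm x, ← hcomm z] at h2
  have h3 := hlalt (β y) (β z) (α (α x))
  calc biAssoc μ (⇑α) (⇑β) (β (β x)) (α (β y)) (α (α z))
      + biAssoc μ (⇑α) (⇑β) (β (β z)) (α (β y)) (α (α x))
      = (biAssoc μ (⇑α) (⇑β) (β (β x)) (α (β y)) (α (α z))
          + biAssoc μ (⇑α) (⇑β) (β (β y)) (α (β x)) (α (α z)))
        - (biAssoc μ (⇑α) (⇑β) (β (β y)) (α (β x)) (α (α z))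
          + biAssoc μ (⇑α) (⇑β) (β (β y)) (α (β z)) (α (α x)))
        + (biAssoc μ (⇑α) (⇑β) (β (β y)) (α (β z)) (α (α x))
          + biAssoc μ (⇑α) (⇑β) (β (β z)) (α (β y)) (α (α x))) := by abel
    _ = 0 - 0 + 0 := by rw [h1, h2, h3]
    _ = 0 := by abel
end

section
/- Any regular left BiHom-alternative and BiHom-flexible algebra is also right BiHom-alternative, hence BiHom-alternative. -/
variable {K A : Type*} [Field K] [CharZero K] [AddCommGroup A] [Module K A]

/-- a regular left BiHom-alternative BiHom-flexible algebra is
right BiHom-alternative, hence BiHom-alternative. -/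
theorem stmt2 (μ : A →ₗ[K] A →ₗ[K] A) (α β : A ≃ₗ[K] A)
    (hcomm : ∀ x, α (β x) = β (α x))
    (hlalt : ∀ x y z, biAssoc μ (⇑α) (⇑β) (β x) (α y) z
        + biAssoc μ (⇑α) (⇑β) (β y) (α x) z = 0)
    (hflex : ∀ x y z, biAssoc μ (⇑α) (⇑β) (β (β x)) (α (β y)) (α (α z))
        + biAssoc μ (⇑α) (⇑β) (β (β z)) (α (β y)) (α (α x)) = 0) :
    (∀ x y z, biAssoc μ (⇑α) (⇑β) x (β y) (α z)
        + biAssoc μ (⇑α) (⇑β) x (β z) (α y) = 0) ∧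
    (∀ x y z, biAssoc μ (⇑α) (⇑β) (β x) (α y) z
        + biAssoc μ (⇑α) (⇑β) (β y) (α x) z = 0) := by
  -- F x y z := as(β²x, αβy, α²z)
  set F : A → A → A → A :=
    fun x y z => biAssoc μ (⇑α) (⇑β) (β (β x)) (α (β y)) (α (α z)) with hF
  have h12 : ∀ x y z, F x y z = - F y x z := by
    intro x y z
    have h := hlalt (β x) (β y) (α (α z))
    simpa [hF] using eq_neg_of_add_eq_zero_left h
  have h13 : ∀ x y z, F x y z = - F z y x := by
    intro x y z
    exact eq_neg_of_add_eq_zero_left (hflex x y z)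
  have h23 : ∀ x y z, F x y z + F x z y = 0 := by
    intro x y z
    rw [h12 x y z, h13 y x z, h12 z x y]
    abel
  refine ⟨?_, hlalt⟩
  intro x y z
  have hx : x = β (β (β.symm (β.symm x))) := by simp
  have hy : (β : A ≃ₗ[K] A) y = α (β (α.symm y)) := by
    rw [hcomm, LinearEquiv.apply_symm_apply]
  have hz : (β : A ≃ₗ[K] A) z = α (β (α.symm z)) := by
    rw [hcomm, LinearEquiv.apply_symm_apply]
  have hαy : (α : A ≃ₗ[K] A) y = α (α (α.symm y)) := by
    rw [LinearEquiv.apply_symm_apply]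
  have hαz : (α : A ≃ₗ[K] A) z = α (α (α.symm z)) := by
    rw [LinearEquiv.apply_symm_apply]
  calc biAssoc μ (⇑α) (⇑β) x (β y) (α z) + biAssoc μ (⇑α) (⇑β) x (β z) (α y)
      = F (β.symm (β.symm x)) (α.symm y) (α.symm z)
        + F (β.symm (β.symm x)) (α.symm z) (α.symm y) := by
        rw [hF]; dsimp only; rw [← hx, ← hy, ← hz, ← hαy, ← hαz]
    _ = 0 := h23 _ _ _
end

section
/- Any regular right BiHom-alternative and BiHom-flexible algebra is also left BiHom-alternative, hence BiHom-alternative. -/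
variable {K A : Type*} [Field K] [CharZero K] [AddCommGroup A] [Module K A]

/-- a regular right BiHom-alternative BiHom-flexible algebra is
left BiHom-alternative, hence BiHom-alternative. -/
theorem stmt3 (μ : A →ₗ[K] A →ₗ[K] A) (α β : A ≃ₗ[K] A)
    (hcomm : ∀ x, α (β x) = β (α x))
    (hralt : ∀ x y z, biAssoc μ (⇑α) (⇑β) x (β y) (α z)
        + biAssoc μ (⇑α) (⇑β) x (β z) (α y) = 0)
    (hflex : ∀ x y z, biAssoc μ (⇑α) (⇑β) (β (β x)) (α (β y)) (α (α z))
        + biAssoc μ (⇑α) (⇑β) (β (β z)) (α (β y)) (α (α x)) = 0) :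
    (∀ x y z, biAssoc μ (⇑α) (⇑β) (β x) (α y) z
        + biAssoc μ (⇑α) (⇑β) (β y) (α x) z = 0) ∧
    (∀ x y z, biAssoc μ (⇑α) (⇑β) x (β y) (α z)
        + biAssoc μ (⇑α) (⇑β) x (β z) (α y) = 0) := by
  refine ⟨?_, hralt⟩
  -- g a b c := as(β²a, αβb, α²c)
  set g : A → A → A → A :=
    fun a b c => biAssoc μ (⇑α) (⇑β) (β (β a)) (α (β b)) (α (α c)) with hg
  have h13 : ∀ a b c, g a b c = - g c b a := fun a b c =>
    eq_neg_of_add_eq_zero_left (hflex a b c)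
  have h23 : ∀ a b c, g a b c = - g a c b := by
    intro a b c
    have := hralt (β (β a)) (α b) (α c)
    simp only [hg, hcomm] at this ⊢
    exact eq_neg_of_add_eq_zero_left this
  have h12 : ∀ a b c, g a b c + g b a c = 0 := by
    intro a b c
    rw [h13 a b c, h13 b a c, h23 c a b]
    abel
  intro x y z
  have := h12 (β.symm x) (β.symm y) (α.symm (α.symm z))
  simpa [hg] using this
end

section
/- Let (A, [-,-], [-,-,-], α, β) be a BiHom-Akivis algebra and φ, ψ : A → A be commuting morphisms of this structure (φψ = ψφ, each commuting with α and β and preserving both brackets). Define [x,y]' := [φ(x), ψ(y)] and [x,y,z]' := φψ²([x,y,z]). Then (A, [-,-]', [-,-,-]', φα, ψβ) is a BiHom-Akivis algebra; moreover if the original is multiplicative, so is the new one. -/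
variable {K A : Type*} [Field K] [CharZero K] [AddCommGroup A] [Module K A]

/-- BiHom-Jacobiator of a binary bracket. -/
def biJac (b : A → A → A) (α β : A → A) (x y z : A) : A :=
  b (β (β x)) (b (β y) (α z)) + b (β (β y)) (b (β z) (α x)) + b (β (β z)) (b (β x) (α y))

/-- twisting a BiHom-Akivis algebra by two commuting self-morphisms
yields a BiHom-Akivis algebra; multiplicativity is preserved. -/
theorem stmt6 (b : A →ₗ[K] A →ₗ[K] A) (t : A →ₗ[K] A →ₗ[K] A →ₗ[K] A)
    (α β φ ψ : A →ₗ[K] A)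
    (hcomm : ∀ x, α (β x) = β (α x))
    (hskew : ∀ x y, b (β x) (α y) = - b (β y) (α x))
    (hak : ∀ x y z, biJac (fun u v => b u v) (⇑α) (⇑β) x y z =
      (t x y z + t y z x + t z x y) - (t y x z + t z y x + t x z y))
    (hφψ : ∀ x, φ (ψ x) = ψ (φ x))
    (hφα : ∀ x, φ (α x) = α (φ x)) (hφβ : ∀ x, φ (β x) = β (φ x))
    (hψα : ∀ x, ψ (α x) = α (ψ x)) (hψβ : ∀ x, ψ (β x) = β (ψ x))
    (hφb : ∀ x y, φ (b x y) = b (φ x) (φ y))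
    (hφt : ∀ x y z, φ (t x y z) = t (φ x) (φ y) (φ z))
    (hψb : ∀ x y, ψ (b x y) = b (ψ x) (ψ y))
    (hψt : ∀ x y z, ψ (t x y z) = t (ψ x) (ψ y) (ψ z)) :
    -- the twisted brackets
    (let b' : A → A → A := fun x y => b (φ x) (ψ y)
     let t' : A → A → A → A := fun x y z => φ (ψ (ψ (t x y z)))
     let α' : A → A := fun x => φ (α x)
     let β' : A → A := fun x => ψ (β x)
     -- the new twisting maps commute
     (∀ x, α' (β' x) = β' (α' x)) ∧
     -- BiHom-skew-symmetry of the new bracket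
     (∀ x y, b' (β' x) (α' y) = - b' (β' y) (α' x)) ∧
     -- BiHom-Akivis identity for the new structure
     (∀ x y z, biJac b' α' β' x y z =
        (t' x y z + t' y z x + t' z x y) - (t' y x z + t' z y x + t' x z y)) ∧
     -- multiplicativity is preserved
     (((∀ x y, α (b x y) = b (α x) (α y)) ∧
       (∀ x y z, α (t x y z) = t (α x) (α y) (α z)) ∧
       (∀ x y, β (b x y) = b (β x) (β y)) ∧
       (∀ x y z, β (t x y z) = t (β x) (β y) (β z))) →
      ((∀ x y, α' (b' x y) = b' (α' x) (α' y)) ∧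
       (∀ x y z, α' (t' x y z) = t' (α' x) (α' y) (α' z)) ∧
       (∀ x y, β' (b' x y) = b' (β' x) (β' y)) ∧
       (∀ x y z, β' (t' x y z) = t' (β' x) (β' y) (β' z))))) := by
  intro b' t' α' β'
  refine ⟨?_, ?_, ?_, ?_⟩
  · intro x
    simp only [α', β', hφψ, hφα, hφβ, hψα, hψβ, hcomm]
  · intro x y
    simp only [b', α', β', hφψ, hφα, hφβ, hψα, hψβ, hcomm]
    exact hskew _ _
  · intro x y z
    have h := hak (ψ (ψ (φ x))) (ψ (ψ (φ y))) (ψ (ψ (φ z)))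
    simp only [biJac] at h ⊢
    simp only [b', t', α', β', hφb, hψb, hφt, hψt, hφψ, hφα, hφβ, hψα, hψβ, hcomm] at h ⊢
    exact h
  · rintro ⟨hα, hαt, hβ, hβt⟩
    refine ⟨?_, ?_, ?_, ?_⟩ <;> intros <;>
      simp only [b', t', α', β', hφb, hψb, hφt, hψt, hα, hαt, hβ, hβt,
        hφψ, hφα, hφβ, hψα, hψβ, hcomm]
end

section
/- If (A, [-,-], [-,-,-], α, β) is a multiplicative BiHom-Akivis algebra, then for all natural numbers n, m, the quintuple (A, [-,-]_{n,m}, [-,-,-]_{n,m}, α^{n+1}, β^{m+1}) with [x,y]_{n,m} := [αⁿ(x), βᵐ(y)] and [x,y,z]_{n,m} := αⁿβ^{2m}([x,y,z]) is a multiplicative BiHom-Akivis algebra. -/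
variable {K A : Type*} [Field K] [CharZero K] [AddCommGroup A] [Module K A]

set_option maxRecDepth 10000 in
/-- twisting a multiplicative BiHom-Akivis algebra by powers of its
structure maps gives a multiplicative BiHom-Akivis algebra. -/
theorem stmt7 (b : A →ₗ[K] A →ₗ[K] A) (t : A →ₗ[K] A →ₗ[K] A →ₗ[K] A)
    (α β : A →ₗ[K] A)
    (hcomm : ∀ x, α (β x) = β (α x))
    (hskew : ∀ x y, b (β x) (α y) = - b (β y) (α x))
    (hak : ∀ x y z, biJac (fun u v => b u v) (⇑α) (⇑β) x y z =
      (t x y z + t y z x + t z x y) - (t y x z + t z y x + t x z y))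
    (hαb : ∀ x y, α (b x y) = b (α x) (α y))
    (hαt : ∀ x y z, α (t x y z) = t (α x) (α y) (α z))
    (hβb : ∀ x y, β (b x y) = b (β x) (β y))
    (hβt : ∀ x y z, β (t x y z) = t (β x) (β y) (β z))
    (n m : ℕ) :
    (let b' : A → A → A := fun x y => b ((⇑α)^[n] x) ((⇑β)^[m] y)
     let t' : A → A → A → A := fun x y z => (⇑α)^[n] ((⇑β)^[2 * m] (t x y z))
     let α' : A → A := (⇑α)^[n + 1]
     let β' : A → A := (⇑β)^[m + 1]
     (∀ x, α' (β' x) = β' (α' x)) ∧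
     (∀ x y, b' (β' x) (α' y) = - b' (β' y) (α' x)) ∧
     (∀ x y z, biJac b' α' β' x y z =
        (t' x y z + t' y z x + t' z x y) - (t' y x z + t' z y x + t' x z y)) ∧
     (∀ x y, α' (b' x y) = b' (α' x) (α' y)) ∧
     (∀ x y z, α' (t' x y z) = t' (α' x) (α' y) (α' z)) ∧
     (∀ x y, β' (b' x y) = b' (β' x) (β' y)) ∧
     (∀ x y z, β' (t' x y z) = t' (β' x) (β' y) (β' z))) := by
  intro b' t' α' β'
  -- commuting of iterates
  have hc : ∀ x, (⇑α) ((⇑β) x) = (⇑β) ((⇑α) x) := hcomm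
  have hC1b : ∀ k x, (⇑α)^[k] (β x) = β ((⇑α)^[k] x) := by
    intro k
    induction k with
    | zero => intro x; simp
    | succ k ih => intro x; rw [Function.iterate_succ_apply', Function.iterate_succ_apply', ih, hc]
  have hCa1 : ∀ j x, (⇑α) ((⇑β)^[j] x) = (⇑β)^[j] (α x) := by
    intro j
    induction j with
    | zero => intro x; simp
    | succ j ih => intro x; rw [Function.iterate_succ_apply', Function.iterate_succ_apply', ← ih, hc]
  have hC : ∀ k j x, (⇑α)^[k] ((⇑β)^[j] x) = (⇑β)^[j] ((⇑α)^[k] x) := by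
    intro k
    induction k with
    | zero => intro j x; simp
    | succ k ih => intro j x; rw [Function.iterate_succ_apply', Function.iterate_succ_apply', ih, hCa1]
  -- iterates are multiplicative w.r.t. brackets
  have hab : ∀ k x y, (⇑α)^[k] (b x y) = b ((⇑α)^[k] x) ((⇑α)^[k] y) := by
    intro k
    induction k with
    | zero => intro x y; simp
    | succ k ih =>
        intro x y
        rw [Function.iterate_succ_apply', Function.iterate_succ_apply',
          Function.iterate_succ_apply', ih, hαb]
  have hbb : ∀ k x y, (⇑β)^[k] (b x y) = b ((⇑β)^[k] x) ((⇑β)^[k] y) := by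
    intro k
    induction k with
    | zero => intro x y; simp
    | succ k ih =>
        intro x y
        rw [Function.iterate_succ_apply', Function.iterate_succ_apply',
          Function.iterate_succ_apply', ih, hβb]
  have hat : ∀ k x y z, (⇑α)^[k] (t x y z) = t ((⇑α)^[k] x) ((⇑α)^[k] y) ((⇑α)^[k] z) := by
    intro k
    induction k with
    | zero => intro x y z; simp
    | succ k ih =>
        intro x y z
        rw [Function.iterate_succ_apply', Function.iterate_succ_apply',
          Function.iterate_succ_apply', Function.iterate_succ_apply', ih, hαt]
  have hbt : ∀ k x y z, (⇑β)^[k] (t x y z) = t ((⇑β)^[k] x) ((⇑β)^[k] y) ((⇑β)^[k] z) := by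
    intro k
    induction k with
    | zero => intro x y z; simp
    | succ k ih =>
        intro x y z
        rw [Function.iterate_succ_apply', Function.iterate_succ_apply',
          Function.iterate_succ_apply', Function.iterate_succ_apply', ih, hβt]
  refine ⟨?_, ?_, ?_, ?_, ?_, ?_, ?_⟩
  · intro x
    simp only [α', β', hC]
  · intro x y
    show b ((⇑α)^[n] ((⇑β)^[m+1] x)) ((⇑β)^[m] ((⇑α)^[n+1] y))
      = - b ((⇑α)^[n] ((⇑β)^[m+1] y)) ((⇑β)^[m] ((⇑α)^[n+1] x))
    have h1 : ∀ u, (⇑α)^[n] ((⇑β)^[m+1] u) = β ((⇑α)^[n] ((⇑β)^[m] u)) := by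
      intro u; rw [Function.iterate_succ_apply', hC1b]
    have h2 : ∀ u, (⇑β)^[m] ((⇑α)^[n+1] u) = α ((⇑α)^[n] ((⇑β)^[m] u)) := by
      intro u; rw [Function.iterate_succ_apply', ← hCa1, ← hC]
    rw [h1 x, h1 y, h2 x, h2 y]
    exact hskew _ _
  · intro x y z
    have H := congrArg (fun u => (⇑α)^[n] ((⇑β)^[2*m] u)) (hak x y z)
    simp only [biJac, map_add, map_sub, iterate_map_add, iterate_map_sub] at H
    show b ((⇑α)^[n] ((⇑β)^[m+1] ((⇑β)^[m+1] x)))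
        ((⇑β)^[m] (b ((⇑α)^[n] ((⇑β)^[m+1] y)) ((⇑β)^[m] ((⇑α)^[n+1] z))))
      + b ((⇑α)^[n] ((⇑β)^[m+1] ((⇑β)^[m+1] y)))
        ((⇑β)^[m] (b ((⇑α)^[n] ((⇑β)^[m+1] z)) ((⇑β)^[m] ((⇑α)^[n+1] x))))
      + b ((⇑α)^[n] ((⇑β)^[m+1] ((⇑β)^[m+1] z)))
        ((⇑β)^[m] (b ((⇑α)^[n] ((⇑β)^[m+1] x)) ((⇑β)^[m] ((⇑α)^[n+1] y))))
      = ((⇑α)^[n] ((⇑β)^[2*m] (t x y z)) + (⇑α)^[n] ((⇑β)^[2*m] (t y z x))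
          + (⇑α)^[n] ((⇑β)^[2*m] (t z x y)))
        - ((⇑α)^[n] ((⇑β)^[2*m] (t y x z)) + (⇑α)^[n] ((⇑β)^[2*m] (t z y x))
          + (⇑α)^[n] ((⇑β)^[2*m] (t x z y)))
    rw [← H]
    have hN : ∀ (a c : ℕ) (u : A), a = c → (⇑β)^[a] u = (⇑β)^[c] u := by
      intro a c u h; rw [h]
    have h2β : ∀ u : A, β (β u) = (⇑β)^[2] u := fun u => rfl
    have h1β : ∀ u : A, β u = (⇑β)^[1] u := fun u => rfl
    have term : ∀ u v w : A,
        b ((⇑α)^[n] ((⇑β)^[m+1] ((⇑β)^[m+1] u)))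
          ((⇑β)^[m] (b ((⇑α)^[n] ((⇑β)^[m+1] v)) ((⇑β)^[m] ((⇑α)^[n+1] w))))
        = (⇑α)^[n] ((⇑β)^[2*m] (b (β (β u)) (b (β v) (α w)))) := by
      intro u v w
      rw [hbb (2*m), hab n, hbb (2*m) (β v) (α w), hab n (β^[2*m] (β v)),
        hbb m ((⇑α)^[n] ((⇑β)^[m+1] v))]
      congr 1
      · rw [← Function.iterate_add_apply ⇑β (m+1) (m+1) u, h2β,
          ← Function.iterate_add_apply ⇑β (2*m) 2 u, hN (m+1+(m+1)) (2*m+2) u (by omega)]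
      · congr 1
        · rw [← hC, ← Function.iterate_add_apply ⇑β m (m+1) v, h1β v,
            ← Function.iterate_add_apply ⇑β (2*m) 1 v, hN (m+(m+1)) (2*m+1) v (by omega)]
        · rw [← Function.iterate_add_apply ⇑β m m ((⇑α)^[n+1] w),
            Function.iterate_succ_apply ⇑α n w, hC n (2*m) (α w),
            hN (m+m) (2*m) _ (by omega)]
    rw [term x y z, term y z x, term z x y]
  · intro x y
    show (⇑α)^[n+1] (b ((⇑α)^[n] x) ((⇑β)^[m] y))
      = b ((⇑α)^[n] ((⇑α)^[n+1] x)) ((⇑β)^[m] ((⇑α)^[n+1] y))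
    rw [hab, hC, ← Function.iterate_add_apply, ← Function.iterate_add_apply, Nat.add_comm]
  · intro x y z
    show (⇑α)^[n+1] ((⇑α)^[n] ((⇑β)^[2*m] (t x y z)))
      = (⇑α)^[n] ((⇑β)^[2*m] (t ((⇑α)^[n+1] x) ((⇑α)^[n+1] y) ((⇑α)^[n+1] z)))
    rw [← hat, ← hC, ← Function.iterate_add_apply, ← Function.iterate_add_apply,
      Nat.add_comm]
  · intro x y
    show (⇑β)^[m+1] (b ((⇑α)^[n] x) ((⇑β)^[m] y))
      = b ((⇑α)^[n] ((⇑β)^[m+1] x)) ((⇑β)^[m] ((⇑β)^[m+1] y))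
    rw [hbb, hC n (m+1) x, ← Function.iterate_add_apply ⇑β (m+1) m y,
      ← Function.iterate_add_apply ⇑β m (m+1) y, Nat.add_comm (m+1) m]
  · intro x y z
    show (⇑β)^[m+1] ((⇑α)^[n] ((⇑β)^[2*m] (t x y z)))
      = (⇑α)^[n] ((⇑β)^[2*m] (t ((⇑β)^[m+1] x) ((⇑β)^[m+1] y) ((⇑β)^[m+1] z)))
    rw [← hbt, ← hC, ← Function.iterate_add_apply, ← Function.iterate_add_apply,
      Nat.add_comm]
end

section
/- Let (A, [-,-], [-,-,-]) be an Akivis algebra and α, β two commuting algebra endomorphisms of A. Define [x,y]_{α,β} := [α(x), β(y)] and [x,y,z]_{α,β} := αβ²([x,y,z]). Then (A, [-,-]_{α,β}, [-,-,-]_{α,β}, α, β) is a multiplicative BiHom-Akivis algebra. -/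
variable {K A : Type*} [Field K] [CharZero K] [AddCommGroup A] [Module K A]

/-- twisting an Akivis algebra along two commuting endomorphisms
yields a multiplicative BiHom-Akivis algebra. -/
theorem stmt8 (b : A →ₗ[K] A →ₗ[K] A) (t : A →ₗ[K] A →ₗ[K] A →ₗ[K] A)
    (hskew : ∀ x y, b x y = - b y x)
    (hak : ∀ x y z, b x (b y z) + b y (b z x) + b z (b x y) =
      (t x y z + t y z x + t z x y) - (t y x z + t z y x + t x z y))
    (α β : A →ₗ[K] A)
    (hcomm : ∀ x, α (β x) = β (α x))
    (hαb : ∀ x y, α (b x y) = b (α x) (α y))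
    (hαt : ∀ x y z, α (t x y z) = t (α x) (α y) (α z))
    (hβb : ∀ x y, β (b x y) = b (β x) (β y))
    (hβt : ∀ x y z, β (t x y z) = t (β x) (β y) (β z)) :
    (let b' : A → A → A := fun x y => b (α x) (β y)
     let t' : A → A → A → A := fun x y z => α (β (β (t x y z)))
     -- BiHom-skew-symmetry
     (∀ x y, b' (β x) (α y) = - b' (β y) (α x)) ∧
     -- BiHom-Akivis identity
     (∀ x y z, biJac b' (⇑α) (⇑β) x y z =
        (t' x y z + t' y z x + t' z x y) - (t' y x z + t' z y x + t' x z y)) ∧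
     -- multiplicativity
     (∀ x y, α (b' x y) = b' (α x) (α y)) ∧
     (∀ x y z, α (t' x y z) = t' (α x) (α y) (α z)) ∧
     (∀ x y, β (b' x y) = b' (β x) (β y)) ∧
     (∀ x y z, β (t' x y z) = t' (β x) (β y) (β z))) := by
  refine ⟨?_, ?_, ?_, ?_, ?_, ?_⟩
  · intro x y
    simp only [hcomm]
    rw [hskew]
  · intro x y z
    have h := congrArg (fun a => α (β (β a))) (hak x y z)
    simp only [map_add, map_sub, hαb, hβb, hαt, hβt, hcomm] at h
    simp only [biJac, hβb, hαt, hβt, hcomm]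
    abel_nf at h ⊢
    exact h
  · intro x y
    simp only [hαb, hcomm]
  · intro x y z
    simp only [hαt, hβt, hcomm]
  · intro x y
    simp only [hβb, hcomm]
  · intro x y z
    simp only [hαt, hβt, hcomm]
end

section
/- Let (A, [-,-], [-,-,-], α, β) be a BiHom-flexible BiHom-Akivis algebra with α surjective. Then (A, [-,-], α, β) is a BiHom-Lie algebra (i.e., the BiHom-Jacobiator Σ_cyc [β²(x),[β(y),α(z)]] vanishes identically) if and only if Σ_cyc [x,y,z] = 0 for all x, y, z ∈ A. -/
variable {K A : Type*} [Field K] [CharZero K] [AddCommGroup A] [Module K A]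

/-- a BiHom-flexible BiHom-Akivis algebra with α surjective is a
BiHom-Lie algebra iff the cyclic sum of the ternary bracket vanishes. -/
theorem stmt10 (b : A →ₗ[K] A →ₗ[K] A) (t : A →ₗ[K] A →ₗ[K] A →ₗ[K] A)
    (α β : A →ₗ[K] A)
    (hcomm : ∀ x, α (β x) = β (α x))
    (hskew : ∀ x y, b (β x) (α y) = - b (β y) (α x))
    (hak : ∀ x y z, biJac (fun u v => b u v) (⇑α) (⇑β) x y z =
      (t x y z + t y z x + t z x y) - (t y x z + t z y x + t x z y))
    (hflex : ∀ x y z, t (α x) (α y) (α z) + t (α z) (α y) (α x) = 0)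
    (hαsurj : Function.Surjective α) :
    (∀ x y z, biJac (fun u v => b u v) (⇑α) (⇑β) x y z = 0) ↔
    (∀ x y z : A, t x y z + t y z x + t z x y = 0) := by
  constructor
  · intro h
    have hanti : ∀ x y z : A, t x y z = - t z y x := by
      intro x y z
      obtain ⟨x, rfl⟩ := hαsurj x
      obtain ⟨y, rfl⟩ := hαsurj y
      obtain ⟨z, rfl⟩ := hαsurj z
      exact eq_neg_of_add_eq_zero_left (hflex x y z)
    intro x y z
    have h1 := hak x y z
    rw [h x y z] at h1
    have hsym : t x y z + t y z x + t z x y = t y x z + t z y x + t x z y :=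
      sub_eq_zero.mp h1.symm
    have hS : t x y z + t y z x + t z x y = -(t x y z + t y z x + t z x y) := by
      nth_rewrite 1 [hsym]
      rw [hanti y x z, hanti z y x, hanti x z y]; abel
    have h2 : (2 : K) • (t x y z + t y z x + t z x y) = 0 := by
      rw [two_smul]
      nth_rewrite 2 [hS]
      abel
    exact (smul_eq_zero.mp h2).resolve_left two_ne_zero
  · intro h x y z
    rw [hak, h x y z]
    have h2 := h y x z
    rw [show t y x z + t z y x + t x z y = t y x z + t x z y + t z y x from by abel, h2]
    simp
end

section
/- Let (A, [-,-], [-,-,-], α, β) be a BiHom-alternative BiHom-Akivis algebra with α and β surjective. Then Σ_cyc [β²(x),[β(y),α(z)]] = 6·[x,y,z] for all x, y, z ∈ A, where Σ_cyc denotes the cyclic sum over (x,y,z). -/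
variable {K A : Type*} [Field K] [CharZero K] [AddCommGroup A] [Module K A]

/-- in a BiHom-alternative BiHom-Akivis algebra with α, β
surjective, the BiHom-Jacobiator equals 6 times the ternary bracket. -/
theorem stmt11 (b : A →ₗ[K] A →ₗ[K] A) (t : A →ₗ[K] A →ₗ[K] A →ₗ[K] A)
    (α β : A →ₗ[K] A)
    (hcomm : ∀ x, α (β x) = β (α x))
    (hskew : ∀ x y, b (β x) (α y) = - b (β y) (α x))
    (hak : ∀ x y z, biJac (fun u v => b u v) (⇑α) (⇑β) x y z =
      (t x y z + t y z x + t z x y) - (t y x z + t z y x + t x z y))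
    (hlalt : ∀ x y z, t (α (α x)) (α (α y)) (β z) + t (α (α y)) (α (α x)) (β z) = 0)
    (hralt : ∀ x y z, t (α x) (β (β y)) (β (β z)) + t (α x) (β (β z)) (β (β y)) = 0)
    (hαsurj : Function.Surjective α) (hβsurj : Function.Surjective β) :
    ∀ x y z : A, biJac (fun u v => b u v) (⇑α) (⇑β) x y z = (6 : ℕ) • t x y z := by
  have hα2 : Function.Surjective (fun x => α (α x)) := hαsurj.comp hαsurj
  have hβ2 : Function.Surjective (fun x => β (β x)) := hβsurj.comp hβsurj
  have h1 : ∀ u v w, t u v w = - t v u w := by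
    intro u v w
    obtain ⟨x, rfl⟩ := hα2 u
    obtain ⟨y, rfl⟩ := hα2 v
    obtain ⟨z, rfl⟩ := hβsurj w
    exact eq_neg_of_add_eq_zero_left (hlalt x y z)
  have h2 : ∀ u v w, t u v w = - t u w v := by
    intro u v w
    obtain ⟨x, rfl⟩ := hαsurj u
    obtain ⟨y, rfl⟩ := hβ2 v
    obtain ⟨z, rfl⟩ := hβ2 w
    exact eq_neg_of_add_eq_zero_left (hralt x y z)
  intro x y z
  have e1 : t y z x = t x y z := by rw [h1 y z x, h2 z y x, h1 z x y, h2 x z y]; abel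
  have e2 : t z x y = t x y z := by rw [h1 z x y, h2 x z y]; abel
  have n1 : t y x z = - t x y z := h1 y x z
  have n2 : t z y x = - t x y z := by rw [h1 z y x, e1]
  have n3 : t x z y = - t x y z := by rw [h2 x z y]
  rw [hak x y z, e1, e2, n1, n2, n3]
  abel
end

section
/- If a multiplicative regular BiHom-algebra (A, μ, α, β) is BiHom-alternative, then its associated BiHom-Akivis algebra with ternary bracket [x,y,z] = as_{α,β}(α⁻¹β²(x), β(y), α(z)) is BiHom-alternative: [α²(x),α²(y),β(z)] + [α²(y),α²(x),β(z)] = 0 and [α(x),β²(y),β²(z)] + [α(x),β²(z),β²(y)] = 0 for all x,y,z. -/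
variable {K A : Type*} [Field K] [CharZero K] [AddCommGroup A] [Module K A]

/-- BiHom-commutator of a regular BiHom-algebra. -/
def biBr (μ : A →ₗ[K] A →ₗ[K] A) (α β : A ≃ₗ[K] A) (x y : A) : A :=
  μ x y - μ (α.symm (β y)) (α (β.symm x))

/-- Ternary bracket of the associated BiHom-Akivis algebra. -/
def biTern (μ : A →ₗ[K] A →ₗ[K] A) (α β : A ≃ₗ[K] A) (x y z : A) : A :=
  biAssoc μ (⇑α) (⇑β) (α.symm (β (β x))) (β y) (α z)

/-- the BiHom-Akivis algebra associated to a BiHom-alternative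
multiplicative regular BiHom-algebra is BiHom-alternative. -/
theorem stmt13 (μ : A →ₗ[K] A →ₗ[K] A) (α β : A ≃ₗ[K] A)
    (hcomm : ∀ x, α (β x) = β (α x))
    (hαμ : ∀ x y, α (μ x y) = μ (α x) (α y))
    (hβμ : ∀ x y, β (μ x y) = μ (β x) (β y))
    (hlalt : ∀ x y z, biAssoc μ (⇑α) (⇑β) (β x) (α y) z
        + biAssoc μ (⇑α) (⇑β) (β y) (α x) z = 0)
    (hralt : ∀ x y z, biAssoc μ (⇑α) (⇑β) x (β y) (α z)
        + biAssoc μ (⇑α) (⇑β) x (β z) (α y) = 0) :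
    (∀ x y z, biTern μ α β (α (α x)) (α (α y)) (β z)
        + biTern μ α β (α (α y)) (α (α x)) (β z) = 0) ∧
    (∀ x y z, biTern μ α β (α x) (β (β y)) (β (β z))
        + biTern μ α β (α x) (β (β z)) (β (β y)) = 0) := by
  have hcs : ∀ x, α.symm (β x) = β (α.symm x) := by
    intro x
    apply α.injective
    rw [α.apply_symm_apply, hcomm, α.apply_symm_apply]
  constructor
  · intro x y z
    have e := hlalt (α (β x)) (α (β y)) (α (β z))
    simp only [biTern, hcs, LinearEquiv.symm_apply_apply, ← hcomm] at e ⊢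
    exact e
  · intro x y z
    have e := hralt (β (β x)) (β (β y)) (β (β z))
    simp only [biTern, hcs, LinearEquiv.symm_apply_apply, ← hcomm] at e ⊢
    exact e
end
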